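/- arXiv:1511.06875 — 2 statements merged into one kernel-verified Lean document; each statement's English description precedes it below -/
import Mathlib

section
/- For a commutative monoid M and a commutative ring B, localization commutes with forming the monoid algebra: if S is a multiplicative subset of M, then the localization of B[M] at the image of S is isomorphic as a B-algebra to B[S^{-1}M]. -/
/-! The map `B[M] → B[S⁻¹M]` induced by the localization map `f : M → S⁻¹M` makes `B[S⁻¹M]`
a localization of `B[M]` at the image of `S`. Elements of `S` become units because `f` inverts
them, and every element of `B[S⁻¹M]` acquires a common denominator `f s`. For injectivity, if `a`
and `b` have the same image, only finitely many coincidences `f m = f m'` between their monomials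
matter, and a single `s ∈ S` realises all of them as `s m = s m'`; then `f` is injective on the
monomials of `s (a - b)`, whose coefficients away from `0` therefore vanish. -/

set_option synthInstance.maxHeartbeats 400000

/-- The ideal of the monoid algebra `B[M]` generated by the basis element corresponding to
the absorbing element `0 ∈ M`. -/
noncomputable def zeroIdeal (B : Type*) [CommRing B] (M : Type*) [CommMonoidWithZero M] :
    Ideal (MonoidAlgebra B M) :=
  Ideal.span {MonoidAlgebra.single (0 : M) (1 : B)}

/-- The contracted monoid algebra `B[M]`: the quotient of the usual monoid algebra by the
ideal generated by the basis element of `0 ∈ M`. -/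
noncomputable abbrev ContractedMonoidAlgebra (B : Type*) [CommRing B] (M : Type*)
    [CommMonoidWithZero M] : Type _ :=
  MonoidAlgebra B M ⧸ zeroIdeal B M

/-- The canonical multiplicative map `M →* B[M]`, `m ↦ [single m 1]`. -/
noncomputable def monoidToContracted (B : Type*) [CommRing B] (M : Type*)
    [CommMonoidWithZero M] : M →* ContractedMonoidAlgebra B M :=
  ((Ideal.Quotient.mk (zeroIdeal B M)).toMonoidHom).comp (MonoidAlgebra.of B M)

open MonoidAlgebra

section ZeroIdeal

variable {B : Type*} [CommRing B] {M : Type*} [CommMonoidWithZero M]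
  {N : Type*} [CommMonoidWithZero N]

lemma monoidToContracted_apply (m : M) :
    monoidToContracted B M m = Ideal.Quotient.mk _ (single m 1) :=
  rfl

lemma mem_zeroIdeal_iff {x : MonoidAlgebra B M} :
    x ∈ zeroIdeal B M ↔ ∀ m ≠ 0, x.coeff m = 0 := by
  constructor
  · rintro hx m hm
    obtain ⟨y, rfl⟩ := Ideal.mem_span_singleton'.mp hx
    exact coeff_mul_single_of_forall_mul_ne _ _ fun d ↦ by simpa using hm.symm
  · intro hx
    have hx_single : x = single 0 (x.coeff 0) := by
      ext m
      by_cases hm : m = 0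
      · simp [hm]
      · simp [hx m hm, Finsupp.single_eq_of_ne' (Ne.symm hm)]
    exact Ideal.mem_span_singleton'.mpr ⟨single 0 (x.coeff 0), by
      rw [single_mul_single, mul_zero, mul_one, ← hx_single]⟩

lemma mem_zeroIdeal_of_mapDomain_mem {g : M → N} (hg0 : g 0 = 0) {x : MonoidAlgebra B M}
    (hg : Set.InjOn g (insert 0 x.coeff.support)) (hx : mapDomain g x ∈ zeroIdeal B N) :
    x ∈ zeroIdeal B M := by
  rw [mem_zeroIdeal_iff] at hx ⊢
  intro m hm
  by_cases hmx : m ∈ x.coeff.support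
  · have hgm : g m ≠ 0 := fun h ↦
      hm (hg (Set.mem_insert_of_mem _ hmx) (Set.mem_insert 0 _) (h.trans hg0.symm))
    rw [← Finsupp.mapDomain_apply' _ x.coeff (Set.subset_insert _ _) hg
      (Set.mem_insert_of_mem _ hmx)]
    exact hx (g m) hgm
  · exact Finsupp.notMem_support_iff.mp hmx

end ZeroIdeal

namespace ContractedMonoidAlgebra

variable (B : Type*) [CommRing B] {M : Type*} [CommMonoidWithZero M]
  {N : Type*} [CommMonoidWithZero N]

noncomputable def mapDomain (g : M →*₀ N) :
    ContractedMonoidAlgebra B M →+* ContractedMonoidAlgebra B N :=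
  Ideal.quotientMap (zeroIdeal B N) (mapDomainRingHom B (g : M →* N)) <|
    Ideal.span_le.mpr <| Set.singleton_subset_iff.mpr <| by
      change MonoidAlgebra.mapDomain g (single 0 1) ∈ zeroIdeal B N
      rw [mapDomain_single, map_zero]
      exact Ideal.subset_span rfl

variable {B}

lemma mapDomain_mk (g : M →*₀ N) (x : MonoidAlgebra B M) :
    mapDomain B g (Ideal.Quotient.mk _ x) = Ideal.Quotient.mk _ (MonoidAlgebra.mapDomain g x) :=
  Ideal.quotientMap_mk

lemma mapDomain_monoidToContracted (g : M →*₀ N) (m : M) :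
    mapDomain B g (monoidToContracted B M m) = monoidToContracted B N (g m) := by
  simp [monoidToContracted_apply, mapDomain_mk]

end ContractedMonoidAlgebra

namespace Submonoid.LocalizationMap

section CommMonoid

variable {M : Type*} [CommMonoid M] {N : Type*} [CommMonoid N] {S : Submonoid M}

lemma exists_injOn_image_mul (f : S.LocalizationMap N) (T : Finset M) :
    ∃ s : S, Set.InjOn f (((s : M) * ·) '' T) := by
  classical
  choose c hc using fun (p : M × M) (h : f p.1 = f p.2) ↦ f.eq_iff_exists.mp h
  refine ⟨∏ p ∈ T ×ˢ T, if h : f p.1 = f p.2 then c p h else 1, ?_⟩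
  rintro _ ⟨a, ha, rfl⟩ _ ⟨b, hb, rfl⟩ hab
  simp only [map_mul] at hab
  have hfab : f a = f b := (f.map_units _).mul_left_cancel hab
  rw [← Finset.mul_prod_erase _ _ (Finset.mk_mem_product ha hb), dif_pos hfab]
  push_cast
  rw [mul_right_comm, hc _ hfab, mul_right_comm]

variable {B : Type*} [CommSemiring B]

lemma exists_mul_single_eq_mapDomain (f : S.LocalizationMap N) (w : MonoidAlgebra B N) :
    ∃ (a : MonoidAlgebra B M) (s : S), w * single (f s) 1 = mapDomain f a := by
  induction w using MonoidAlgebra.induction_linear with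
  | zero => exact ⟨0, 1, by simp⟩
  | add p q hp hq =>
    obtain ⟨a, s, ha⟩ := hp
    obtain ⟨b, t, hb⟩ := hq
    refine ⟨a * single (t : M) 1 + b * single (s : M) 1, s * t, ?_⟩
    change _ = mapDomainRingHom B (f : M →* N) _
    simp only [map_add, map_mul, mapDomainRingHom_apply, mapDomain_single, MonoidHom.coe_coe]
    have hst : single (f s * f t) (1 : B) = single (f s) 1 * single (f t) 1 := by
      rw [single_mul_single, one_mul]
    rw [← ha, ← hb, Submonoid.coe_mul, map_mul, hst]
    ring
  | single n b =>
    obtain ⟨⟨m, s⟩, hms⟩ := f.surj n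
    exact ⟨single m b, s, by rw [single_mul_single, mul_one, hms, mapDomain_single]⟩

end CommMonoid

variable {B : Type*} [CommRing B] {M : Type*} [CommMonoidWithZero M]
  {N : Type*} [CommMonoidWithZero N] {S : Submonoid M}

lemma exists_single_mul_mem_zeroIdeal (f : S.LocalizationMap N) {d : MonoidAlgebra B M}
    (hd : mapDomain f d ∈ zeroIdeal B N) :
    ∃ s : S, single (s : M) (1 : B) * d ∈ zeroIdeal B M := by
  classical
  obtain ⟨s, hs⟩ := f.exists_injOn_image_mul (insert 0 d.coeff.support)
  refine ⟨s, mem_zeroIdeal_of_mapDomain_mem (map_zero f) (hs.mono ?_) ?_⟩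
  · rintro m (rfl | hm)
    · exact ⟨0, by simp, mul_zero _⟩
    · obtain ⟨m', hm', rfl⟩ := Finset.mem_image.mp (support_coeff_single_mul_subset d 1 _ hm)
      exact ⟨m', by simp [hm'], rfl⟩
  · change mapDomainRingHom B (f : M →* N) _ ∈ _
    rw [map_mul]
    exact Ideal.mul_mem_left _ _ hd

theorem isLocalization_contractedMonoidAlgebra (f : S.LocalizationMap N) :
    let _ := (ContractedMonoidAlgebra.mapDomain B (MonoidWithZeroHom.ofClass f)).toAlgebra
    IsLocalization (S.map (monoidToContracted B M)) (ContractedMonoidAlgebra B N) := by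
  let _ := (ContractedMonoidAlgebra.mapDomain B (MonoidWithZeroHom.ofClass f)).toAlgebra
  refine ⟨?_, fun z ↦ ?_, fun {x y} h ↦ ?_⟩
  · rintro ⟨-, s, hs, rfl⟩
    rw [RingHom.algebraMap_toAlgebra, ContractedMonoidAlgebra.mapDomain_monoidToContracted]
    exact (f.map_units ⟨s, hs⟩).map _
  · obtain ⟨w, rfl⟩ := Ideal.Quotient.mk_surjective z
    obtain ⟨a, s, h⟩ := f.exists_mul_single_eq_mapDomain w
    refine ⟨(Ideal.Quotient.mk _ a, ⟨_, s, s.2, rfl⟩), ?_⟩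
    simp [RingHom.algebraMap_toAlgebra, ContractedMonoidAlgebra.mapDomain_mk,
      monoidToContracted_apply, ← map_mul, h]
  · obtain ⟨a, rfl⟩ := Ideal.Quotient.mk_surjective x
    obtain ⟨b, rfl⟩ := Ideal.Quotient.mk_surjective y
    have hab : MonoidAlgebra.mapDomain f (a - b) ∈ zeroIdeal B N := by
      change mapDomainRingHom B (f : M →* N) (a - b) ∈ _
      rw [map_sub]
      exact Ideal.Quotient.eq.mp h
    obtain ⟨s, hs⟩ := f.exists_single_mul_mem_zeroIdeal hab
    refine ⟨⟨_, s, s.2, rfl⟩, ?_⟩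
    simp only [monoidToContracted_apply, ← map_mul]
    rwa [Ideal.Quotient.mk_eq_mk_iff_sub_mem, ← mul_sub]

end Submonoid.LocalizationMap

theorem stmt_8_general (B : Type*) [CommRing B] (M : Type*) [CommMonoidWithZero M]
    (S : Submonoid M)
    (N : Type*) [CommMonoidWithZero N] (f : Submonoid.LocalizationMap S N) :
    ∃ e : Localization (S.map (monoidToContracted B M)) ≃+* ContractedMonoidAlgebra B N,
      (∀ b : B, e (algebraMap (ContractedMonoidAlgebra B M) _
          (Ideal.Quotient.mk (zeroIdeal B M) (MonoidAlgebra.single (1 : M) b))) =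
        Ideal.Quotient.mk (zeroIdeal B N) (MonoidAlgebra.single (1 : N) b)) ∧
      (∀ m : M, e (algebraMap (ContractedMonoidAlgebra B M) _
          (Ideal.Quotient.mk (zeroIdeal B M) (MonoidAlgebra.single m (1 : B)))) =
        Ideal.Quotient.mk (zeroIdeal B N) (MonoidAlgebra.single (f.toMonoidHom m) (1 : B))) := by
  let _ := (ContractedMonoidAlgebra.mapDomain B (MonoidWithZeroHom.ofClass f)).toAlgebra
  have := f.isLocalization_contractedMonoidAlgebra (B := B)
  let e := IsLocalization.algEquiv (S.map (monoidToContracted B M))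
    (Localization (S.map (monoidToContracted B M))) (ContractedMonoidAlgebra B N)
  refine ⟨e.toRingEquiv, fun b ↦ ?_, fun m ↦ ?_⟩ <;>
    simp [e, RingHom.algebraMap_toAlgebra, ContractedMonoidAlgebra.mapDomain_mk]

/-- **Localization commutes with forming the monoid algebra.** If `S ⊆ M` is a submonoid not
containing `0` and `N` is a localization of `M` at `S` (witnessed by a localization map
`f : M → N`), then the localization of `B[M]` at the image of `S` is isomorphic, compatibly
with the `B`-algebra structures, to `B[S⁻¹M] = B[N]`. -/
theorem stmt_8 (B : Type*) [CommRing B] (M : Type*) [CommMonoidWithZero M]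
    (S : Submonoid M) (h0 : (0 : M) ∉ S)
    (N : Type*) [CommMonoidWithZero N] (f : Submonoid.LocalizationMap S N)
    (hf0 : f.toMonoidHom 0 = 0) :
    ∃ e : Localization (S.map (monoidToContracted B M)) ≃+* ContractedMonoidAlgebra B N,
      (∀ b : B, e (algebraMap (ContractedMonoidAlgebra B M) _
          (Ideal.Quotient.mk (zeroIdeal B M) (MonoidAlgebra.single (1 : M) b))) =
        Ideal.Quotient.mk (zeroIdeal B N) (MonoidAlgebra.single (1 : N) b)) ∧
      (∀ m : M, e (algebraMap (ContractedMonoidAlgebra B M) _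
          (Ideal.Quotient.mk (zeroIdeal B M) (MonoidAlgebra.single m (1 : B)))) =
        Ideal.Quotient.mk (zeroIdeal B N) (MonoidAlgebra.single (f.toMonoidHom m) (1 : B))) :=
  stmt_8_general B M S N f
end

section
/- For the projective line over a commutative ring B with its standard two-chart affine covering U = {U_0, U_1}, and d ≥ 0, the 0-th Čech cohomology H^0(ℙ¹_B, O(d); U) is a free B-module of rank d + 1, and H^1(ℙ¹_B, O(d); U) = 0. -/
/-- The Čech complex differential of `O(d)` on `ℙ¹_B` for the standard two-chart covering:
`B[t] × B[t⁻¹] → B[t,t⁻¹]`, `(f, g) ↦ f − t^d · g`, where `B[t⁻¹]` is embedded via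
`t ↦ T⁻¹` into the Laurent polynomials. -/
noncomputable def cechP1 (B : Type*) [CommRing B] (d : ℤ) :
    Polynomial B × Polynomial B →ₗ[B] LaurentPolynomial B :=
  (Polynomial.toLaurentAlg.toLinearMap.comp (LinearMap.fst B (Polynomial B) (Polynomial B))) -
    ((LinearMap.mulLeft B (LaurentPolynomial.T d)).comp
      ((Polynomial.aeval (LaurentPolynomial.T (-1))).toLinearMap.comp
        (LinearMap.snd B (Polynomial B) (Polynomial B))))

/-!
A Čech 0-cocycle `(f, g)` satisfies `f(t) = t^d g(t⁻¹)` in `B[t, t⁻¹]`. Comparing coefficients,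
`f` has degree at most `d`, and `f` determines `g` because `t^d` is a unit; conversely each
`t^i` with `i ≤ d` extends to the cocycle `(t^i, t^(d-i))`. So `H⁰` is the module of polynomials
of degree `≤ d`, free on `1, t, …, t^d`. For `H¹`, every Laurent monomial `t^n` is hit: by
`(t^n, 0)` if `n ≥ 0` and by `(0, -t^(d-n))` if `n ≤ d`, and one of the two holds once `d ≥ -1`.
-/

open Polynomial LaurentPolynomial

section LaurentCoeff

variable {R : Type*} [Semiring R]

theorem Polynomial.coeff_toLaurent_natCast (f : R[X]) (n : ℕ) :
    (toLaurent f).coeff n = f.coeff n :=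
  Finsupp.mapDomain_apply Nat.cast_injective f.toFinsupp.coeff n

theorem Polynomial.coeff_toLaurent_of_neg (f : R[X]) {n : ℤ} (hn : n < 0) :
    (toLaurent f).coeff n = 0 := by
  refine Finsupp.mapDomain_of_notMem_range _ _ ?_
  rintro ⟨k, rfl⟩
  exact (Int.natCast_nonneg k).not_gt hn

theorem LaurentPolynomial.coeff_T_mul (m : ℤ) (q : R[T;T⁻¹]) (n : ℤ) :
    (T m * q).coeff n = q.coeff (n - m) := by
  rw [T, AddMonoidAlgebra.coeff_single_mul_apply, one_mul, neg_add_eq_sub]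

end LaurentCoeff

theorem Polynomial.aeval_T_neg_one {R : Type*} [CommSemiring R] (g : R[X]) :
    aeval (T (-1) : R[T;T⁻¹]) g = invert (toLaurent g) := by
  have h : (invert.toAlgHom.comp toLaurentAlg : R[X] →ₐ[R] R[T;T⁻¹]) = aeval (T (-1)) :=
    Polynomial.algHom_ext (by simp)
  simpa [toLaurentAlg_apply] using (DFunLike.congr_fun h g).symm

section CechP1

variable {B : Type*} [CommRing B]

theorem cechP1_apply (d : ℤ) (f g : B[X]) :
    cechP1 B d (f, g) = toLaurent f - T d * invert (toLaurent g) := by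
  simp [cechP1, aeval_T_neg_one]

theorem mem_ker_cechP1 {d : ℤ} {f g : B[X]} :
    (f, g) ∈ LinearMap.ker (cechP1 B d) ↔ toLaurent f = T d * invert (toLaurent g) := by
  rw [LinearMap.mem_ker, cechP1_apply, sub_eq_zero]

theorem X_pow_mem_ker_cechP1 {d i : ℕ} (hi : i ≤ d) :
    ((X : B[X]) ^ i, X ^ (d - i)) ∈ LinearMap.ker (cechP1 B d) := by
  rw [mem_ker_cechP1, toLaurent_X_pow, toLaurent_X_pow, invert_T, ← T_add]
  congr 1
  omega

-- A section of `O(d)` over `ℙ¹` is determined by its restriction to `U₀`.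
theorem injective_fst_comp_subtype_ker_cechP1 (d : ℤ) :
    Function.Injective ((LinearMap.fst B B[X] B[X]).comp (LinearMap.ker (cechP1 B d)).subtype) := by
  rintro ⟨⟨f, g⟩, hfg⟩ ⟨⟨f', g'⟩, hfg'⟩ (rfl : f = f')
  rw [mem_ker_cechP1] at hfg hfg'
  have : g = g' := toLaurent_injective <| invert.injective <|
    (isUnit_T d).mul_left_cancel (hfg.symm.trans hfg')
  subst this
  rfl

theorem natDegree_le_of_mem_ker_cechP1 {d : ℕ} {f g : B[X]}
    (h : (f, g) ∈ LinearMap.ker (cechP1 B d)) : f.natDegree ≤ d := by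
  refine natDegree_le_iff_coeff_eq_zero.2 fun n hn => ?_
  have := congrArg (·.coeff n) (mem_ker_cechP1.1 h)
  simp only [coeff_toLaurent_natCast, coeff_T_mul, invert_apply] at this
  rw [this, coeff_toLaurent_of_neg]
  omega

theorem range_fst_comp_subtype_ker_cechP1 (d : ℕ) :
    LinearMap.range ((LinearMap.fst B B[X] B[X]).comp (LinearMap.ker (cechP1 B d)).subtype) =
      degreeLT B (d + 1) := by
  classical
  rw [LinearMap.range_comp, Submodule.range_subtype]
  apply le_antisymm
  · rintro _ ⟨⟨f, g⟩, hfg, rfl⟩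
    exact mem_degreeLT.2 <|
      (degree_le_of_natDegree_le (natDegree_le_of_mem_ker_cechP1 hfg)).trans_lt
        (by exact_mod_cast d.lt_succ_self)
  · rw [degreeLT_eq_span_X_pow, Submodule.span_le]
    intro p hp
    obtain ⟨i, hi, rfl⟩ := by simpa using hp
    exact ⟨_, X_pow_mem_ker_cechP1 hi, rfl⟩

noncomputable def kerCechP1EquivDegreeLT (d : ℕ) :
    LinearMap.ker (cechP1 B d) ≃ₗ[B] degreeLT B (d + 1) :=
  (LinearEquiv.ofInjective _ (injective_fst_comp_subtype_ker_cechP1 d)).trans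
    (LinearEquiv.ofEq _ _ (range_fst_comp_subtype_ker_cechP1 d))

theorem T_mem_range_cechP1 {d n : ℤ} (hd : -1 ≤ d) : T n ∈ LinearMap.range (cechP1 B d) := by
  rcases le_or_gt 0 n with hn | hn
  · lift n to ℕ using hn
    exact ⟨(X ^ n, 0), by simp [cechP1_apply, toLaurent_X_pow]⟩
  · lift d - n to ℕ using (by omega) with m hm
    refine ⟨(0, -X ^ m), ?_⟩
    rw [cechP1_apply, map_neg, map_neg, toLaurent_X_pow, invert_T, map_zero, zero_sub, mul_neg,
      neg_neg, ← T_add]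
    congr 1
    omega

theorem range_cechP1_eq_top {d : ℤ} (hd : -1 ≤ d) : LinearMap.range (cechP1 B d) = ⊤ := by
  refine eq_top_iff.2 fun p _ => p.induction_on' (fun _ _ => add_mem) fun n a => ?_
  rw [← LaurentPolynomial.smul_eq_C_mul]
  exact Submodule.smul_mem _ a (T_mem_range_cechP1 hd)

end CechP1

/-- **Cohomology of `O(d)` on `ℙ¹_B` for `d ≥ 0`.** With respect to the standard two-chart
covering, `H⁰(ℙ¹_B, O(d))` (the kernel of the Čech differential) is a free `B`-module of
rank `d + 1`, and `H¹(ℙ¹_B, O(d))` vanishes (the Čech differential is surjective). -/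
theorem stmt_16 (B : Type*) [CommRing B] (d : ℕ) :
    Nonempty (Module.Basis (Fin (d + 1)) B (LinearMap.ker (cechP1 B (d : ℤ)))) ∧
    LinearMap.range (cechP1 B (d : ℤ)) = ⊤ :=
  ⟨⟨.ofEquivFun ((kerCechP1EquivDegreeLT d).trans (degreeLTEquiv B (d + 1)))⟩,
    range_cechP1_eq_top (by omega)⟩
end
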